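/- arXiv:1809.04839 — 2 statements merged into one kernel-verified Lean document; each statement's English description precedes it below -/
import Mathlib

section
/- Let I be a finite subset of the real interval [0,1], let n be a positive integer, and let M be a real number. Then the set of all real numbers of the form Σ_{i=1}^{u} c_i·(k_i/n), where u is a positive integer, c_1, ..., c_u ∈ I satisfy Σ_{i=1}^{u} c_i = 1, and k_1, ..., k_u are positive integers, which are strictly less than M, is a finite set. -/
/-- Let `I` be a finite subset of `[0,1]`, `n` a positive integer, `M` real.
The set of all reals of the form `∑ i, c i * (k i / n)` with `u > 0`, `c i ∈ I`,
`∑ i, c i = 1` and `k i` positive integers, which are `< M`, is finite. -/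
theorem stmt_1 (I : Finset ℝ) (hI : (I : Set ℝ) ⊆ Set.Icc 0 1) (n : ℕ) (hn : 0 < n)
    (M : ℝ) :
    {x : ℝ | (∃ (u : ℕ) (c : Fin u → ℝ) (k : Fin u → ℕ), 0 < u ∧
      (∀ i, c i ∈ I) ∧ (∑ i, c i = 1) ∧ (∀ i, 0 < k i) ∧
      x = ∑ i, c i * ((k i : ℝ) / (n : ℝ))) ∧ x < M}.Finite := by
  classical
  set P : Finset ℝ := I.filter (fun a => 0 < a) with hPdef
  by_cases hP : P.Nonempty
  · set ε : ℝ := P.min' hP with hε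
    have hεpos : 0 < ε := (Finset.mem_filter.mp (P.min'_mem hP)).2
    have hnR : (0:ℝ) < (n:ℝ) := by exact_mod_cast hn
    set N : ℕ := ⌈M * n / ε⌉₊ with hN
    set T : Finset ℝ := (I ×ˢ Finset.range N).image
      (fun p => p.1 * ((p.2 : ℝ) / (n : ℝ))) with hT
    set target : Finset ℝ := (Finset.range (N+1)).biUnion
      (fun m => (Fintype.piFinset fun _ : Fin m => T).image fun f => ∑ j, f j) with htarget
    apply Set.Finite.subset target.finite_toSet
    rintro x ⟨⟨u, c, k, hu, hcI, hsum1, hkpos, hx⟩, hxM⟩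
    -- basic facts
    have hc0 : ∀ i, 0 ≤ c i := fun i => (hI (hcI i)).1
    have htnn : ∀ i, 0 ≤ c i * ((k i : ℝ) / n) := fun i =>
      mul_nonneg (hc0 i) (div_nonneg (Nat.cast_nonneg _) hnR.le)
    set s : Finset (Fin u) := Finset.univ.filter (fun i => c i ≠ 0) with hs
    have hεle : ∀ i ∈ s, ε ≤ c i := by
      intro i hi
      have hne : c i ≠ 0 := (Finset.mem_filter.mp hi).2
      have : c i ∈ P := Finset.mem_filter.mpr ⟨hcI i, lt_of_le_of_ne (hc0 i) (Ne.symm hne)⟩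
      exact P.min'_le _ this
    have hterm_le : ∀ i, c i * ((k i : ℝ) / n) ≤ x := by
      intro i
      rw [hx]
      exact Finset.single_le_sum (fun j _ => htnn j) (Finset.mem_univ i)
    -- bound on k i for i ∈ s
    have hkN : ∀ i ∈ s, k i < N := by
      intro i hi
      have h1 : ε * ((k i : ℝ) / n) ≤ c i * ((k i : ℝ) / n) :=
        mul_le_mul_of_nonneg_right (hεle i hi) (div_nonneg (Nat.cast_nonneg _) hnR.le)
      have h2 : ε * ((k i : ℝ) / n) < M := lt_of_le_of_lt (h1.trans (hterm_le i)) hxM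
      have h3 : (k i : ℝ) < M * n / ε := by
        rw [lt_div_iff₀ hεpos]
        calc (k i : ℝ) * ε = ε * ((k i : ℝ) / n) * n := by field_simp
        _ < M * n := by exact mul_lt_mul_of_pos_right h2 hnR
      exact Nat.lt_ceil.mpr h3
    -- bound on card s
    have hcard : s.card < N := by
      have h1 : (s.card : ℝ) * (ε / n) ≤ x := by
        rw [hx, ← Finset.sum_filter_of_ne (p := fun i => c i ≠ 0)
          (by intro i _ h h0; exact h (by simp [h0]))]
        calc (s.card : ℝ) * (ε / n) = ∑ _i ∈ s, (ε / n) := by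
              rw [Finset.sum_const, nsmul_eq_mul]
        _ ≤ ∑ i ∈ s, c i * ((k i : ℝ) / n) := by
              apply Finset.sum_le_sum
              intro i hi
              have hk1 : (1:ℝ) ≤ (k i : ℝ) := by exact_mod_cast hkpos i
              calc ε / n = ε * ((1:ℝ)/n) := by ring
              _ ≤ c i * ((k i : ℝ)/n) :=
                mul_le_mul (hεle i hi) (by gcongr)
                  (by positivity) ((hεpos.le).trans (hεle i hi))
      have h2 : (s.card : ℝ) < M * n / ε := by
        rw [lt_div_iff₀ hεpos]
        calc (s.card : ℝ) * ε = (s.card : ℝ) * (ε / n) * n := by field_simp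
        _ < M * n := mul_lt_mul_of_pos_right (lt_of_le_of_lt h1 hxM) hnR
      exact Nat.lt_ceil.mpr h2
    -- membership in target
    have hxsum : x = ∑ i ∈ s, c i * ((k i : ℝ) / n) := by
      rw [hx, Finset.sum_filter_of_ne]
      intro i _ h h0
      exact h (by simp [h0])
    rw [Finset.mem_coe, htarget, Finset.mem_biUnion]
    refine ⟨s.card, Finset.mem_range.mpr (Nat.lt_succ_of_lt hcard), ?_⟩
    rw [Finset.mem_image]
    set e := s.equivFin with he
    refine ⟨fun j => c ((e.symm j : s) : Fin u) * ((k ((e.symm j : s) : Fin u) : ℝ) / n), ?_, ?_⟩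
    · rw [Fintype.mem_piFinset]
      intro j
      have hmem : ((e.symm j : s) : Fin u) ∈ s := (e.symm j).2
      rw [hT, Finset.mem_image]
      exact ⟨(c _, k _), Finset.mem_product.mpr ⟨hcI _, Finset.mem_range.mpr (hkN _ hmem)⟩, rfl⟩
    · rw [hxsum, ← Finset.sum_coe_sort s (fun i => c i * ((k i : ℝ) / n))]
      exact Equiv.sum_comp e.symm (fun i : s => c (i : Fin u) * ((k (i : Fin u) : ℝ) / n))
  · -- P empty: the set is empty
    convert Set.finite_empty
    ext x
    simp only [Set.mem_setOf_eq, Set.mem_empty_iff_false, iff_false]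
    rintro ⟨⟨u, c, k, hu, hcI, hsum1, hkpos, hx⟩, hxM⟩
    have hc0 : ∀ i, c i = 0 := by
      intro i
      by_contra h
      have hpos : 0 < c i := lt_of_le_of_ne (hI (hcI i)).1 (Ne.symm h)
      exact hP ⟨c i, Finset.mem_filter.mpr ⟨hcI i, hpos⟩⟩
    simp [hc0] at hsum1
end

section
/- Let a be a real number, let A be a finite set of real numbers each of which is strictly less than a, and let T be a set of real numbers satisfying the ACC. Then the set { x ∈ ℝ : x > a and there exists α ∈ A with (x − a)/(x − α) ∈ T } satisfies the ACC. -/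
/-- A set of real numbers satisfies the ascending chain condition if it contains
no strictly increasing infinite sequence. -/
def SatisfiesACC (S : Set ℝ) : Prop :=
  ∀ f : ℕ → ℝ, StrictMono f → ¬ ∀ m, f m ∈ S

/-- If `A` is a finite set of reals each `< a` and `T` satisfies the ACC,
then `{x : ℝ | x > a ∧ ∃ α ∈ A, (x − a)/(x − α) ∈ T}` satisfies the ACC. -/
theorem stmt_4 (a : ℝ) (A : Finset ℝ) (hA : ∀ α ∈ A, α < a)
    (T : Set ℝ) (hT : SatisfiesACC T) :
    SatisfiesACC {x : ℝ | a < x ∧ ∃ α ∈ A, (x - a) / (x - α) ∈ T} := by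
  intro f hf hmem
  -- choose, for each n, an α with the property
  have hch : ∀ n : ℕ, ∃ α : A, (f n - a) / (f n - (α : ℝ)) ∈ T := by
    intro n
    obtain ⟨_, α, hαA, hαT⟩ := hmem n
    exact ⟨⟨α, hαA⟩, hαT⟩
  choose c hc using hch
  by_cases hAe : A = ∅
  · obtain ⟨_, α, hαA, _⟩ := hmem 0
    simp [hAe] at hαA
  have : Nonempty A := by
    rcases Finset.nonempty_iff_ne_empty.2 hAe with ⟨x, hx⟩
    exact ⟨⟨x, hx⟩⟩
  obtain ⟨α, hαfib⟩ := Finite.exists_infinite_fiber c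
  have hinf : (setOf (fun n => c n = α)).Infinite := by
    rw [← Set.infinite_coe_iff]; exact hαfib
  set g : ℕ → ℕ := Nat.nth (fun n => c n = α)
  have hgmono : StrictMono g := Nat.nth_strictMono hinf
  have hgmem : ∀ n, c (g n) = α := fun n => Nat.nth_mem_of_infinite hinf n
  have hαa : (α : ℝ) < a := hA α α.2
  -- the composed sequence in T is strictly increasing
  refine hT (fun n => (f (g n) - a) / (f (g n) - (α : ℝ))) ?_ ?_
  · intro m n hmn
    have hx : a < f (g m) := (hmem (g m)).1
    have hy : f (g m) < f (g n) := hf (hgmono hmn)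
    have hxα : (0:ℝ) < f (g m) - α := by linarith
    have hyα : (0:ℝ) < f (g n) - α := by linarith
    rw [div_lt_div_iff₀ hxα hyα]
    nlinarith
  · intro n
    have := hc (g n)
    rwa [hgmem n] at this
end
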